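/- arXiv:0902.3436 — 2 statements merged into one kernel-verified Lean document; each statement's English description precedes it below -/
import Mathlib

section
/- Let X be a simplicial set and n ≥ 1, and suppose X is aspherical in dimension n, i.e., every morphism ∂Δ[n] → X extends along ∂Δ[n] ↪ Δ[n] to a morphism Δ[n] → X. Then for every 0 ≤ k ≤ n+1, every morphism Λ[n+1,k] → X extends along the inclusion Λ[n+1,k] ↪ ∂Δ[n+1] to a morphism ∂Δ[n+1] → X; that is, every k-horn of dimension n+1 in X can be completed to a compatible full boundary (the projection from the (n+1)-st simplicial kernel of X to the set of k-horns of dimension n+1 is surjective). -/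
open CategoryTheory Simplicial

/-- The canonical inclusion of the `k`-th horn of the `n`-th standard simplex into the
boundary of the `n`-th standard simplex. -/
def hornToBoundary (n : ℕ) (k : Fin (n + 1)) : (Λ[n, k] : SSet) ⟶ ∂Δ[n] where
  app m := TypeCat.ofHom fun α =>
    ⟨α.1, fun hsurj => α.2 (by
      apply Set.eq_univ_of_univ_subset
      intro x _
      exact Or.inl (hsurj x))⟩
  naturality _ _ _ := rfl

/-!
The boundary `∂Δ[n+1]` is the union of the horn `Λ[n+1, k]` and the face opposite to `k`, and
these two subcomplexes meet in the image of `∂Δ[n]` under `δ k`. Hence `∂Δ[n+1]` is the pushout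
of `Λ[n+1, k] ← ∂Δ[n] → Δ[n]`: a horn in `X` restricts along `δ k` to a map `∂Δ[n] → X`,
asphericity fills it to a simplex `Δ[n] → X`, and the horn and this simplex glue to a boundary.
-/

universe u

namespace SSet

lemma Subcomplex.image_preimage_eq_inf_range {X Y : SSet.{u}} (B : Y.Subcomplex) (f : X ⟶ Y) :
    (B.preimage f).image f = B ⊓ Subcomplex.range f := by
  ext m y
  simp [Set.image_preimage_eq_inter_range]

lemma horn_le_boundary (n : ℕ) (k : Fin (n + 1)) : Λ[n, k] ≤ ∂Δ[n] := by
  rw [horn_eq_iSup]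
  exact iSup_le fun j ↦ face_singleton_compl_le_boundary j.1

lemma horn_sup_face_singleton_compl_eq_boundary (n : ℕ) (k : Fin (n + 2)) :
    Λ[n + 1, k] ⊔ stdSimplex.face {k}ᶜ = ∂Δ[n + 1] := by
  refine le_antisymm (sup_le (horn_le_boundary _ k) (face_singleton_compl_le_boundary k)) ?_
  rw [boundary_eq_iSup]
  refine iSup_le fun j ↦ ?_
  by_cases hj : j = k
  · subst hj
    exact le_sup_right
  · exact (face_le_horn j k hj).trans le_sup_left

lemma horn_preimage_δ_eq_boundary (n : ℕ) (k : Fin (n + 2)) :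
    Λ[n + 1, k].preimage (stdSimplex.δ k) = ∂Δ[n] := by
  ext ⟨m⟩ s
  induction m using SimplexCategory.rec with | _ d
  have hδ (x : Fin (d + 1)) : ((stdSimplex.δ k).app _ s) x = k.succAbove (s x) := rfl
  simp only [Subcomplex.preimage_obj, Set.mem_preimage, mem_horn_iff_notMem_range,
    mem_boundary_iff_notMem_range, Set.mem_range, hδ, not_exists]
  constructor
  · rintro ⟨j, hjk, hj⟩
    obtain ⟨j, rfl⟩ := Fin.exists_succAbove_eq hjk
    exact ⟨j, fun x hx ↦ hj x (congrArg _ hx)⟩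
  · rintro ⟨j, hj⟩
    exact ⟨k.succAbove j, Fin.succAbove_ne k j,
      fun x hx ↦ hj x (Fin.succAbove_right_injective hx)⟩

lemma range_boundary_ι_comp_δ (n : ℕ) (k : Fin (n + 2)) :
    Subcomplex.range (∂Δ[n].ι ≫ stdSimplex.δ k) = Λ[n + 1, k] ⊓ stdSimplex.face {k}ᶜ := by
  rw [← Subcomplex.image_eq_range, ← horn_preimage_δ_eq_boundary,
    Subcomplex.image_preimage_eq_inf_range, stdSimplex.range_δ]

def boundaryToHorn (n : ℕ) (k : Fin (n + 2)) : (∂Δ[n] : SSet.{u}) ⟶ Λ[n + 1, k] :=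
  Subcomplex.lift (∂Δ[n].ι ≫ stdSimplex.δ k) ((range_boundary_ι_comp_δ n k).trans_le inf_le_left)

lemma isPushout_boundaryToHorn (n : ℕ) (k : Fin (n + 2)) :
    IsPushout (boundaryToHorn.{u} n k) ∂Δ[n].ι (hornToBoundary (n + 1) k) (boundary.ι k) := by
  have sq : Subcomplex.BicartSq (Subcomplex.range (∂Δ[n].ι ≫ stdSimplex.δ k)) Λ[n + 1, k]
      (stdSimplex.face {k}ᶜ) ∂Δ[n + 1] :=
    ⟨horn_sup_face_singleton_compl_eq_boundary n k, (range_boundary_ι_comp_δ n k).symm⟩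
  refine sq.isPushout.of_iso' (asIso (Subcomplex.toRange _)) (Iso.refl _)
    (stdSimplex.faceSingletonComplIso k) (Iso.refl _) ?_ ?_ ?_ ?_ <;> rfl

end SSet

theorem horn_extends_to_boundary_of_aspherical_general (X : SSet.{0}) (n : ℕ)
    (hX : ∀ g : (∂Δ[n] : SSet) ⟶ X, ∃ g' : Δ[n] ⟶ X, (∂Δ[n]).ι ≫ g' = g) :
    ∀ (k : Fin (n + 2)) (g : (Λ[n + 1, k] : SSet) ⟶ X),
      ∃ g' : (∂Δ[n + 1] : SSet) ⟶ X, hornToBoundary (n + 1) k ≫ g' = g := by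
  intro k g
  obtain ⟨G, hG⟩ := hX (SSet.boundaryToHorn n k ≫ g)
  have sq := SSet.isPushout_boundaryToHorn n k
  exact ⟨sq.desc g G hG.symm, sq.inl_desc _ _ _⟩

/-- If a simplicial set `X` is aspherical in dimension `n ≥ 1` (every map `∂Δ[n] ⟶ X` extends
to `Δ[n]`), then every horn `Λ[n+1, k] ⟶ X` of dimension `n+1` extends along the inclusion
`Λ[n+1, k] ↪ ∂Δ[n+1]` to a full boundary `∂Δ[n+1] ⟶ X`. -/
theorem horn_extends_to_boundary_of_aspherical (X : SSet.{0}) (n : ℕ) (hn : 1 ≤ n)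
    (hX : ∀ g : (∂Δ[n] : SSet) ⟶ X, ∃ g' : Δ[n] ⟶ X, (∂Δ[n]).ι ≫ g' = g) :
    ∀ (k : Fin (n + 2)) (g : (Λ[n + 1, k] : SSet) ⟶ X),
      ∃ g' : (∂Δ[n + 1] : SSet) ⟶ X, hornToBoundary (n + 1) k ≫ g' = g :=
  horn_extends_to_boundary_of_aspherical_general X n hX
end

section
/- Every aspherical augmented simplicial set is split: let X be an augmented simplicial set, i.e., a simplicial set X• together with a set X₋₁ and an augmentation map p : X₀ → X₋₁ with p ∘ d₀ = p ∘ d₁ : X₁ → X₋₁. Suppose that (i) p : X₀ → X₋₁ is surjective, (ii) the map (d₀,d₁) : X₁ → X₀ ×_{X₋₁} X₀ into the fiber product over X₋₁ is surjective, and (iii) for every n ≥ 2 the boundary map X_n → K_n(X), x ↦ (d₀(x),…,d_n(x)), to the n-th simplicial kernel is surjective. Then X admits a contraction (extra degeneracy): there exist maps s : X₋₁ → X₀ and, for each n ≥ 0, maps X_n → X_{n+1} which together with the structure maps of X satisfy all the simplicial identities involving degeneracies (so that X becomes a split augmented simplicial set). -/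
open CategoryTheory Simplicial Opposite

universe u

/-!
The extra degeneracy `s : X_n → X_{n+1}` is built by induction on `n`. For `y ∈ X_{n+1}`, the
tuple `(y, s (δ₀ y), …, s (δ_{n+1} y))` lies in the simplicial kernel `K_{n+2}(X)`, so asphericity
provides a simplex with these faces, which we take as `s y`; in dimension `0`, (i) and (ii) play
this role. The identity `s ∘ σ_i = σ_{i+1} ∘ s` forces `s (σ_i x) = σ_{i+1} (s x)` on degenerate
simplices. This is well defined because `σ_i z = σ_{j+1} x` with `i ≤ j` forces `z = σ_j w` and
`x = σ_i w` for a common `w`, and it has the required faces by the simplicial identities.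
-/

namespace SSet

variable {X : SSet.{u}} {n : ℕ}

/-- The simplicial kernel `K_{n+2}(X)` (note the shift of the index). -/
def simplicialKernel (X : SSet.{u}) (n : ℕ) : Set (Fin (n + 3) → X _⦋n + 1⦌) :=
  {x | ∀ i j : Fin (n + 2), i ≤ j → X.δ i (x j.succ) = X.δ j (x i.castSucc)}

lemma δ_mk_eq_of_mem_simplicialKernel {x : Fin (n + 3) → X _⦋n + 1⦌}
    (hx : x ∈ X.simplicialKernel n) (i j : ℕ) (hij : i < j) (hj : j ≤ n + 2) :
    X.δ ⟨i, hij.trans_le hj⟩ (x ⟨j, Nat.lt_succ_of_le hj⟩) =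
      X.δ ⟨j - 1, Nat.sub_one_lt_of_le (Nat.zero_lt_of_lt hij) hj⟩
        (x ⟨i, Nat.lt_succ_of_lt (hij.trans_le hj)⟩) := by
  obtain ⟨j, rfl⟩ : ∃ j', j = j' + 1 := ⟨j - 1, by omega⟩
  exact hx ⟨i, by omega⟩ ⟨j, by omega⟩ (Fin.mk_le_mk.mpr (by omega))

lemma σ_injective (i : Fin (n + 1)) : Function.Injective (X.σ i) :=
  Function.LeftInverse.injective (δ_comp_σ_self_apply i)

lemma exists_eq_σ_of_σ_castSucc_eq_σ_succ {i j : Fin (n + 1)} (hij : i ≤ j)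
    {z x : X _⦋n + 1⦌} (h : X.σ i.castSucc z = X.σ j.succ x) :
    ∃ w, z = X.σ j w ∧ x = X.σ i w := by
  have hz : z = X.σ j (X.δ i.castSucc x) := by
    rw [← δ_comp_σ_self_apply i.castSucc z, h,
      δ_comp_σ_of_le_apply (Fin.castSucc_le_castSucc_iff.mpr hij)]
  have hx : x = X.σ i (X.δ j.succ z) := by
    rw [← δ_comp_σ_succ_apply j.succ x, ← h,
      δ_comp_σ_of_gt_apply (Fin.castSucc_lt_succ_iff.mpr hij)]
  exact ⟨_, hz, hx.trans (by rw [hz, δ_comp_σ_succ_apply])⟩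

/-- The faces that the extra degeneracy `s` must give to `z = s y`, namely `δ₀ z = y` and
`δ_{k+1} z = s (δ_k y)`, where `f` is `s` one dimension lower. -/
def IsCone (f : X _⦋n⦌ → X _⦋n + 1⦌) (y : X _⦋n + 1⦌) (z : X _⦋n + 2⦌) : Prop :=
  X.δ 0 z = y ∧ ∀ k : Fin (n + 2), X.δ k.succ z = f (X.δ k y)

structure IsContractionStep (f : X _⦋n⦌ → X _⦋n + 1⦌) (g : X _⦋n + 1⦌ → X _⦋n + 2⦌) :
    Prop where
  isCone : ∀ y, IsCone f y (g y)
  σ_succ : ∀ (i : Fin (n + 1)) (x : X _⦋n⦌), g (X.σ i x) = X.σ i.succ (f x)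

structure IsExtendable (f : X _⦋n⦌ → X _⦋n + 1⦌) : Prop where
  δ_zero : ∀ y, X.δ 0 (f y) = y
  δ_succ_comm : ∀ (y : X _⦋n + 1⦌) (i j : Fin (n + 1)), i ≤ j →
    X.δ i.succ (f (X.δ j.succ y)) = X.δ j.succ (f (X.δ i.castSucc y))
  isCone_σ : ∀ (i : Fin (n + 1)) (x : X _⦋n⦌), IsCone f (X.σ i x) (X.σ i.succ (f x))
  σ_succ_eq : ∀ (i j : Fin (n + 1)) (z x : X _⦋n⦌),
    X.σ i z = X.σ j x → X.σ i.succ (f z) = X.σ j.succ (f x)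

variable {f : X _⦋n⦌ → X _⦋n + 1⦌}

lemma IsExtendable.cons_mem_simplicialKernel (hf : IsExtendable f) (y : X _⦋n + 1⦌) :
    Fin.cons y (fun k => f (X.δ k y)) ∈ X.simplicialKernel n := by
  intro i j hij
  cases i using Fin.cases with
  | zero => simp [hf.δ_zero]
  | succ i =>
    obtain ⟨j, rfl⟩ := Fin.exists_succ_eq.mpr (Fin.ne_zero_of_lt (Fin.succ_pos i |>.trans_le hij))
    simpa [← Fin.succ_castSucc] using hf.δ_succ_comm y i j (Fin.succ_le_succ_iff.mp hij)

lemma IsExtendable.exists_isContractionStep (hf : IsExtendable f)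
    (hX : X.simplicialKernel n ⊆ Set.range fun z k => X.δ k z) :
    ∃ g, IsContractionStep f g := by
  have hcone (y : X _⦋n + 1⦌) :
      ∃ z, IsCone f y z ∧ ∀ i x, X.σ i x = y → z = X.σ i.succ (f x) := by
    by_cases hy : ∃ i x, X.σ i x = y
    · obtain ⟨i, x, rfl⟩ := hy
      exact ⟨_, hf.isCone_σ i x, fun j x' h => hf.σ_succ_eq i j x x' h.symm⟩
    · obtain ⟨z, hz⟩ := hX (hf.cons_mem_simplicialKernel y)
      refine ⟨z, ⟨by simpa using congrFun hz 0, fun k => by simpa using congrFun hz k.succ⟩,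
        fun i x h => (hy ⟨i, x, h⟩).elim⟩
  choose g hg using hcone
  exact ⟨g, fun y => (hg y).1, fun i x => (hg _).2 i x rfl⟩

variable {g : X _⦋n + 1⦌ → X _⦋n + 2⦌}

lemma IsContractionStep.δ_succ_σ_succ (h : IsContractionStep f g) (i : Fin (n + 2))
    (x : X _⦋n + 1⦌) (k : Fin (n + 3)) :
    X.δ k.succ (X.σ i.succ (g x)) = g (X.δ k (X.σ i x)) := by
  obtain hk | rfl | rfl | hk : k < i.castSucc ∨ k = i.castSucc ∨ k = i.succ ∨ i.succ < k := by
    simp only [Fin.lt_def, Fin.ext_iff, Fin.val_castSucc, Fin.val_succ]; omega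
  · obtain ⟨k, rfl⟩ := Fin.exists_castSucc_eq.mpr (Fin.ne_last_of_lt hk)
    have hk := Fin.castSucc_lt_castSucc_iff.mp hk
    obtain ⟨i, rfl⟩ := Fin.exists_succ_eq.mpr (Fin.ne_zero_of_lt hk)
    have hk := Fin.le_castSucc_iff.mpr hk
    rw [Fin.succ_castSucc, δ_comp_σ_of_le_apply (by simpa [← Fin.succ_castSucc] using hk),
      δ_comp_σ_of_le_apply hk, h.σ_succ, (h.isCone x).2]
  · rw [Fin.succ_castSucc, δ_comp_σ_self_apply, δ_comp_σ_self_apply]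
  · rw [δ_comp_σ_succ_apply, δ_comp_σ_succ_apply]
  · obtain ⟨k, rfl⟩ := Fin.exists_succ_eq.mpr (Fin.ne_zero_of_lt hk)
    have hk := Fin.succ_lt_succ_iff.mp hk
    obtain ⟨i, rfl⟩ := Fin.exists_castSucc_eq.mpr (Fin.ne_last_of_lt hk)
    rw [Fin.succ_castSucc, δ_comp_σ_of_gt_apply (by simpa [← Fin.succ_castSucc] using hk),
      δ_comp_σ_of_gt_apply hk, h.σ_succ, (h.isCone x).2]

lemma IsContractionStep.σ_succ_eq (h : IsContractionStep f g) (i j : Fin (n + 2))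
    (z x : X _⦋n + 1⦌) (hzx : X.σ i z = X.σ j x) : X.σ i.succ (g z) = X.σ j.succ (g x) := by
  wlog hij : i ≤ j generalizing i j z x
  · exact (this j i x z hzx.symm (le_of_not_ge hij)).symm
  obtain rfl | hij := hij.eq_or_lt
  · rw [σ_injective i hzx]
  obtain ⟨i, rfl⟩ := Fin.exists_castSucc_eq.mpr (Fin.ne_last_of_lt hij)
  obtain ⟨j, rfl⟩ := Fin.exists_succ_eq.mpr (Fin.ne_zero_of_lt hij)
  have hij := Fin.castSucc_lt_succ_iff.mp hij
  obtain ⟨w, rfl, rfl⟩ := exists_eq_σ_of_σ_castSucc_eq_σ_succ hij hzx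
  rw [h.σ_succ, h.σ_succ, Fin.succ_castSucc, σ_comp_σ_apply (Fin.succ_le_succ_iff.mpr hij)]

lemma IsContractionStep.isExtendable (h : IsContractionStep f g) : IsExtendable g where
  δ_zero y := (h.isCone y).1
  δ_succ_comm y i j hij := by rw [(h.isCone _).2, (h.isCone _).2, δ_comp_δ_apply hij]
  isCone_σ i x := by
    refine ⟨?_, h.δ_succ_σ_succ i x⟩
    simpa [(h.isCone x).1] using δ_comp_σ_of_le_apply (Fin.zero_le i.castSucc) (g x)
  σ_succ_eq := h.σ_succ_eq

lemma isExtendable_zero {f : X _⦋0⦌ → X _⦋1⦌} (hδ₀ : ∀ x, X.δ 0 (f x) = x)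
    (hδ₁ : ∀ y, X.δ 1 (f (X.δ 1 y)) = X.δ 1 (f (X.δ 0 y))) : IsExtendable f where
  δ_zero := hδ₀
  δ_succ_comm y i j _ := by
    obtain rfl := Fin.fin_one_eq_zero i
    obtain rfl := Fin.fin_one_eq_zero j
    exact hδ₁ y
  isCone_σ i x := by
    obtain rfl := Fin.fin_one_eq_zero i
    refine ⟨by simpa [hδ₀] using δ_comp_σ_of_le_apply (Fin.zero_le (0 : Fin 1).castSucc) (f x),
      fun k => ?_⟩
    fin_cases k
    · exact (δ_comp_σ_self_apply 1 (f x)).trans (congrArg f (δ_comp_σ_self_apply 0 x)).symm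
    · exact (δ_comp_σ_succ_apply 1 (f x)).trans (congrArg f (δ_comp_σ_succ_apply 0 x)).symm
  σ_succ_eq i j z x h := by
    obtain rfl := Fin.fin_one_eq_zero i
    obtain rfl := Fin.fin_one_eq_zero j
    rw [σ_injective 0 h]

lemma exists_isContractionStep_seq {f₀ : X _⦋0⦌ → X _⦋1⦌} (hf₀ : IsExtendable f₀)
    (hX : ∀ n, X.simplicialKernel n ⊆ Set.range fun z k => X.δ k z) :
    ∃ s : ∀ n, X _⦋n⦌ → X _⦋n + 1⦌, s 0 = f₀ ∧ (∀ n, IsExtendable (s n)) ∧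
      ∀ n, IsContractionStep (s n) (s (n + 1)) := by
  let s (n : ℕ) : {f : X _⦋n⦌ → X _⦋n + 1⦌ // IsExtendable f} :=
    Nat.rec (motive := fun n => {f : X _⦋n⦌ → X _⦋n + 1⦌ // IsExtendable f}) ⟨f₀, hf₀⟩
      (fun n f => ⟨_, (f.2.exists_isContractionStep (hX n)).choose_spec.isExtendable⟩) n
  exact ⟨fun n => s n, rfl, fun n => (s n).2,
    fun n => ((s n).2.exists_isContractionStep (hX n)).choose_spec⟩

end SSet

/-- Every aspherical augmented simplicial set is split: if `A` is an augmented simplicial set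
(an augmented simplicial object in `Type u`) such that
(i) the augmentation `p : X₀ → X₋₁` is surjective,
(ii) the map `(d₀, d₁) : X₁ → X₀ ×_{X₋₁} X₀` to the fiber product over the augmentation is
surjective, and
(iii) for every `n ≥ 2` the boundary map `X_n → K_n(X)` to the `n`-th simplicial kernel is
surjective,
then `A` admits a contraction (an extra degeneracy). -/
theorem augmented_aspherical_is_split (A : CategoryTheory.SimplicialObject.Augmented (Type u))
    (h0 : Function.Surjective (A.hom.app (op (SimplexCategory.mk 0))))
    (h1 : ∀ a b : A.left _⦋0⦌,
      A.hom.app (op (SimplexCategory.mk 0)) a = A.hom.app (op (SimplexCategory.mk 0)) b →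
      ∃ x : A.left _⦋1⦌, A.left.δ 0 x = a ∧ A.left.δ 1 x = b)
    (h2 : ∀ (n : ℕ) (x : Fin (n + 3) → A.left _⦋n + 1⦌),
      (∀ (i j : ℕ) (hij : i < j) (hj : j ≤ n + 2),
        A.left.δ ⟨i, by omega⟩ (x ⟨j, by omega⟩) = A.left.δ ⟨j - 1, by omega⟩ (x ⟨i, by omega⟩)) →
      ∃ y : A.left _⦋n + 2⦌, ∀ i : Fin (n + 3), A.left.δ i y = x i) :
    Nonempty (SimplicialObject.Augmented.ExtraDegeneracy A) := by
  choose s' hs' using h0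
  choose f₀ hf₀δ₀ hf₀δ₁ using fun x => h1 x (s' (A.hom.app _ x)) (hs' _).symm
  have hε (i : Fin 2) (y : A.left _⦋1⦌) :
      A.hom.app (op ⦋0⦌) (A.left.δ i y) = A.hom.app (op ⦋1⦌) y :=
    ConcreteCategory.congr_hom (SimplicialObject.δ_naturality A.hom i) y
  have hX (n : ℕ) : SSet.simplicialKernel A.left n ⊆ Set.range fun z k => A.left.δ k z :=
    fun x hx => let ⟨y, hy⟩ := h2 n x (SSet.δ_mk_eq_of_mem_simplicialKernel hx)
    ⟨y, funext hy⟩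
  obtain ⟨s, rfl, hs, hstep⟩ := SSet.exists_isContractionStep_seq
    (SSet.isExtendable_zero hf₀δ₀ fun y => by rw [hf₀δ₁, hf₀δ₁, hε, hε]) hX
  exact ⟨{
    s' := TypeCat.ofHom s'
    s n := TypeCat.ofHom (s n)
    s'_comp_ε := by ext; exact hs' _
    s₀_comp_δ₁ := by ext; exact hf₀δ₁ _
    s_comp_δ₀ n := by ext; exact (hs n).δ_zero _
    s_comp_δ n i := by ext; exact ((hstep n).isCone _).2 i
    s_comp_σ n i := by ext; exact ((hstep n).σ_succ i _).symm }⟩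
end
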